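/- Sufficient ascent of the GPM step: Under the generative model, suppose α > ‖A ∘ Δ‖ + ‖W − μ·1_n1_nᵀ‖. Then a₀ := λ_min(A ∘ Δ + (A − μ·1_{nd}1_{nd}ᵀ) ∘ G*G*ᵀ + α I_{nd}) > 0, and for every G ∈ O(d)^{⊗n} and every G⁺ ∈ T_α(G), one has f(G⁺) − f(G) ≥ a₀ · ‖G⁺ − G‖_F², where f(G) := tr(Gᵀ C G). -/

import Mathlib

/-!
Write `C̃ = M + μ G*G*ᵀ`, where `M` is the matrix whose least eigenvalue is `a₀`. After the
blockwise orthogonal change of variables `v ↦ (G*ᵢᵀ vᵢ)ᵢ`, the quadratic form of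
`(A − μ 1 1ᵀ) ∘ G*G*ᵀ` becomes `d` copies of that of `W − μ 1 1ᵀ`, so
`a₀ ≥ α − ‖A ∘ Δ‖ − ‖W − μ 1 1ᵀ‖ > 0`.

On `O(d)^{⊗n}` the objective `f` differs from `G ↦ tr(Gᵀ C̃ G)` by the constant `α n d`, and with
`D = G⁺ − G`, `tr(G⁺ᵀ C̃ G⁺) − tr(Gᵀ C̃ G) = tr(Dᵀ C̃ D) + 2 tr(Dᵀ C̃ G)`. Being a nearest
orthogonal matrix to `C̃ᵢᵀ G`, each `G⁺ᵢ` maximizes `tr(Xᵀ C̃ᵢᵀ G)` over `X ∈ O(d)`, so the cross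
term is nonnegative, while `tr(Dᵀ C̃ D) ≥ a₀ ‖D‖_F² + μ ‖G*ᵀ D‖_F²`.
-/

open Matrix BigOperators

noncomputable section
namespace GroupSync

variable {n d : ℕ}

/-- Frobenius norm of a real matrix. -/
def frob {m k : Type*} [Fintype m] [Fintype k] (X : Matrix m k ℝ) : ℝ :=
  Real.sqrt (∑ i, ∑ j, (X i j) ^ 2)

/-- Spectral (operator) norm of a real matrix: the operator norm of the induced
linear map between Euclidean spaces. -/
def spec {m k : Type*} [Fintype m] [Fintype k] [DecidableEq k] (X : Matrix m k ℝ) : ℝ :=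
  ‖LinearMap.toContinuousLinearMap (Matrix.toEuclideanLin X)‖

/-- Nuclear norm: trace of the positive semidefinite square root of `X * Xᵀ`
(i.e. the sum of the singular values of `X`). -/
def nuclear {m k : Type*} [Fintype m] [Fintype k] [DecidableEq m] (X : Matrix m k ℝ) : ℝ :=
  ((Matrix.isHermitian_mul_conjTranspose_self X).eigenvectorUnitary.1 *
    Matrix.diagonal (((↑) : ℝ → ℝ) ∘ (Real.sqrt ·) ∘
      (Matrix.isHermitian_mul_conjTranspose_self X).eigenvalues) *
    (star (Matrix.isHermitian_mul_conjTranspose_self X).eigenvectorUnitary : Matrix m m ℝ)).trace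

/-- The positive semidefinite square root of `X * Xᵀ`. -/
def psdSqrtMulT {m k : Type*} [Fintype m] [Fintype k] [DecidableEq m] (X : Matrix m k ℝ) :
    Matrix m m ℝ :=
  ((Matrix.isHermitian_mul_conjTranspose_self X).eigenvectorUnitary.1 *
    Matrix.diagonal (((↑) : ℝ → ℝ) ∘ (Real.sqrt ·) ∘
      (Matrix.isHermitian_mul_conjTranspose_self X).eigenvalues) *
    (star (Matrix.isHermitian_mul_conjTranspose_self X).eigenvectorUnitary : Matrix m m ℝ))

/-- Membership in the orthogonal group `O(d)`. -/
def IsOd (g : Matrix (Fin d) (Fin d) ℝ) : Prop :=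
  gᵀ * g = 1 ∧ g * gᵀ = 1

/-- Membership in the special orthogonal group `SO(d)`. -/
def IsSOd (g : Matrix (Fin d) (Fin d) ℝ) : Prop :=
  IsOd g ∧ g.det = 1

/-- The `i`-th `d × d` block of an `nd × d` matrix. -/
def blk (X : Matrix (Fin n × Fin d) (Fin d) ℝ) (i : Fin n) : Matrix (Fin d) (Fin d) ℝ :=
  Matrix.of fun a b => X (i, a) b

/-- Membership in `O(d)^{⊗n}`: every `d × d` block is orthogonal. -/
def OdN (G : Matrix (Fin n × Fin d) (Fin d) ℝ) : Prop :=
  ∀ i : Fin n, IsOd (blk G i)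

/-- Membership in `SO(d)^{⊗n}`. -/
def SOdN (G : Matrix (Fin n × Fin d) (Fin d) ℝ) : Prop :=
  ∀ i : Fin n, IsSOd (blk G i)

/-- The `i`-th block column (an `nd × d` matrix) of an `nd × nd` matrix. -/
def bcol (M : Matrix (Fin n × Fin d) (Fin n × Fin d) ℝ) (i : Fin n) :
    Matrix (Fin n × Fin d) (Fin d) ℝ :=
  Matrix.of fun p b => M p (i, b)

/-- The `ij`-th `d × d` block of an `nd × nd` matrix. -/
def dblk (M : Matrix (Fin n × Fin d) (Fin n × Fin d) ℝ) (i j : Fin n) :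
    Matrix (Fin d) (Fin d) ℝ :=
  Matrix.of fun a b => M (i, a) (j, b)

/-- `G' ∈ T_α(G)` (where `Ct = C + α I`): `G' ∈ O(d)^{⊗n}` and each block `G'_i` is a
nearest point of `C̃ᵢᵀ G` in `O(d)` w.r.t. the Frobenius norm. -/
def InT (Ct : Matrix (Fin n × Fin d) (Fin n × Fin d) ℝ)
    (G G' : Matrix (Fin n × Fin d) (Fin d) ℝ) : Prop :=
  OdN G' ∧ ∀ i : Fin n, ∀ X : Matrix (Fin d) (Fin d) ℝ, IsOd X →
    frob (blk G' i - (bcol Ct i)ᵀ * G) ≤ frob (X - (bcol Ct i)ᵀ * G)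

/-- `G' ∈ ST_α(G)`: the `SO(d)` analogue of `InT`. -/
def InST (Ct : Matrix (Fin n × Fin d) (Fin n × Fin d) ℝ)
    (G G' : Matrix (Fin n × Fin d) (Fin d) ℝ) : Prop :=
  SOdN G' ∧ ∀ i : Fin n, ∀ X : Matrix (Fin d) (Fin d) ℝ, IsSOd X →
    frob (blk G' i - (bcol Ct i)ᵀ * G) ≤ frob (X - (bcol Ct i)ᵀ * G)

/-- The quotient distance `d(X, Y) = min_{g ∈ O(d)} ‖X − Y g‖_F`. -/
def dOrth (X Y : Matrix (Fin n × Fin d) (Fin d) ℝ) : ℝ :=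
  ⨅ g : {g : Matrix (Fin d) (Fin d) ℝ // IsOd g}, frob (X - Y * g.1)

/-- The objective function `f(G) = tr(Gᵀ C G)`. -/
def obj (C : Matrix (Fin n × Fin d) (Fin n × Fin d) ℝ)
    (G : Matrix (Fin n × Fin d) (Fin d) ℝ) : ℝ :=
  Matrix.trace (Gᵀ * C * G)

/-- Hadamard (entrywise) product. -/
def had {m k : Type*} (X Y : Matrix m k ℝ) : Matrix m k ℝ :=
  Matrix.of fun p q => X p q * Y p q

/-- `W ⊗ (1_d 1_dᵀ)`, the Kronecker product of `W` with the all-ones `d × d` matrix. -/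
def kron1 (W : Matrix (Fin n) (Fin n) ℝ) : Matrix (Fin n × Fin d) (Fin n × Fin d) ℝ :=
  Matrix.kroneckerMap (· * ·) W (Matrix.of fun (_ _ : Fin d) => (1 : ℝ))

/-- The all-ones matrix `1_m 1_mᵀ`. -/
def onesMat (m : Type*) : Matrix m m ℝ :=
  Matrix.of fun _ _ => (1 : ℝ)

/-- `symblockdiag`: symmetrize the diagonal `d × d` blocks, zero out all other blocks. -/
def sbd (X : Matrix (Fin n × Fin d) (Fin n × Fin d) ℝ) :
    Matrix (Fin n × Fin d) (Fin n × Fin d) ℝ :=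
  Matrix.of fun p q => if p.1 = q.1 then (X p q + X (p.1, q.2) (q.1, p.2)) / 2 else 0

/-- `S(G) = symblockdiag(C G Gᵀ) − C`. -/
def Smat (C : Matrix (Fin n × Fin d) (Fin n × Fin d) ℝ)
    (G : Matrix (Fin n × Fin d) (Fin d) ℝ) : Matrix (Fin n × Fin d) (Fin n × Fin d) ℝ :=
  sbd (C * (G * Gᵀ)) - C

/-- `G` is a second-order critical point of (QP): `S(G) G = 0` and
`⟨H, S(G) H⟩ ≥ 0` for all tangent directions `H` (blockwise `Hᵢ Gᵢᵀ` skew-symmetric). -/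
def IsSOC (C : Matrix (Fin n × Fin d) (Fin n × Fin d) ℝ)
    (G : Matrix (Fin n × Fin d) (Fin d) ℝ) : Prop :=
  Smat C G * G = 0 ∧
  ∀ H : Matrix (Fin n × Fin d) (Fin d) ℝ,
    (∀ i : Fin n, (blk H i * (blk G i)ᵀ)ᵀ = -(blk H i * (blk G i)ᵀ)) →
    0 ≤ Matrix.trace (Hᵀ * (Smat C G * H))

/-- Smallest singular value of a square matrix, as the minimum of `‖M v‖` over
unit vectors `v`. -/
def sigmaMin (M : Matrix (Fin d) (Fin d) ℝ) : ℝ :=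
  ⨅ v : {v : Fin d → ℝ // ∑ a, (v a) ^ 2 = 1}, Real.sqrt (∑ a, (M.mulVec v.1 a) ^ 2)

/-- The singular values of a square matrix: square roots of the eigenvalues of `Mᵀ M`. -/
def singVal (M : Matrix (Fin d) (Fin d) ℝ) (l : Fin d) : ℝ :=
  Real.sqrt ((Matrix.isHermitian_conjTranspose_mul_self M).eigenvalues l)

/-- Smallest eigenvalue of a (symmetric) matrix, as the minimum Rayleigh quotient
over unit vectors. -/
def lambdaMin {m : Type*} [Fintype m] (M : Matrix m m ℝ) : ℝ :=
  ⨅ v : {v : m → ℝ // ∑ i, (v i) ^ 2 = 1}, v.1 ⬝ᵥ M.mulVec v.1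

/-- `D_α(G)`: block diagonal of the psd square roots of `(C̃ᵢᵀ G)(C̃ᵢᵀ G)ᵀ`, minus `C̃`. -/
def Dmat (Ct : Matrix (Fin n × Fin d) (Fin n × Fin d) ℝ)
    (G : Matrix (Fin n × Fin d) (Fin d) ℝ) : Matrix (Fin n × Fin d) (Fin n × Fin d) ℝ :=
  (Matrix.of fun p q =>
    if p.1 = q.1 then psdSqrtMulT ((bcol Ct p.1)ᵀ * G) p.2 q.2 else 0) - Ct

/-- The residual function `ρ_α(G) = ‖D_α(G) G‖_F`. -/
def rho (Ct : Matrix (Fin n × Fin d) (Fin n × Fin d) ℝ)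
    (G : Matrix (Fin n × Fin d) (Fin d) ℝ) : ℝ :=
  frob (Dmat Ct G * G)

/-- Blockwise infinity norm: `‖X‖_∞ = max_i ‖X_i‖` (spectral norm of the blocks). -/
def binf (X : Matrix (Fin n × Fin d) (Fin d) ℝ) : ℝ :=
  ⨆ i : Fin n, spec (blk X i)

section Rayleigh

variable {m : Type*} [Fintype m]

lemma frob_sq {k : Type*} [Fintype k] (X : Matrix m k ℝ) :
    frob X ^ 2 = ∑ i, ∑ j, X i j ^ 2 :=
  Real.sq_sqrt (by positivity)

lemma frob_sq_eq_trace {k : Type*} [Fintype k] (X : Matrix m k ℝ) :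
    frob X ^ 2 = trace (Xᵀ * X) := by
  rw [frob_sq, ← trace_transpose_mul, transpose_transpose, ← sum_hadamard_eq]
  simp only [hadamard_apply, sq]

lemma trace_transpose_mul_mul_eq_sum {k : Type*} [Fintype k] (N : Matrix m m ℝ)
    (X : Matrix m k ℝ) : trace (Xᵀ * N * X) = ∑ b, Xᵀ b ⬝ᵥ N *ᵥ Xᵀ b := by
  simp only [trace, diag, mul_apply, dotProduct, mulVec, transpose_apply, Finset.sum_mul,
    Finset.mul_sum]
  refine Finset.sum_congr rfl fun b _ => Finset.sum_comm.trans ?_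
  simp only [mul_assoc, mul_left_comm]

variable [DecidableEq m]

lemma abs_dotProduct_mulVec_le_spec (X : Matrix m m ℝ) (v : m → ℝ) :
    |v ⬝ᵥ X *ᵥ v| ≤ spec X * ∑ i, v i ^ 2 := by
  set w : EuclideanSpace ℝ m := WithLp.toLp 2 v
  have hform : v ⬝ᵥ X *ᵥ v = inner ℝ w (toEuclideanLin X w) := by
    simp [w, PiLp.inner_apply, dotProduct, mul_comm]
  have hnorm : ‖w‖ ^ 2 = ∑ i, v i ^ 2 := by
    simp [w, EuclideanSpace.norm_eq, Real.sq_sqrt (by positivity : (0 : ℝ) ≤ ∑ i, v i ^ 2)]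
  calc |v ⬝ᵥ X *ᵥ v| ≤ ‖w‖ * ‖toEuclideanLin X w‖ := hform ▸ abs_real_inner_le_norm _ _
    _ ≤ ‖w‖ * (spec X * ‖w‖) :=
        mul_le_mul_of_nonneg_left
          ((LinearMap.toContinuousLinearMap (toEuclideanLin X)).le_opNorm w) (norm_nonneg _)
    _ = spec X * ∑ i, v i ^ 2 := by rw [← hnorm]; ring

lemma neg_spec_le_dotProduct_mulVec (X : Matrix m m ℝ) (v : m → ℝ) :
    -(spec X * ∑ i, v i ^ 2) ≤ v ⬝ᵥ X *ᵥ v :=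
  neg_le_of_abs_le (abs_dotProduct_mulVec_le_spec X v)

lemma lambdaMin_le_dotProduct_mulVec (M : Matrix m m ℝ) {v : m → ℝ}
    (hv : ∑ i, v i ^ 2 = 1) : lambdaMin M ≤ v ⬝ᵥ M *ᵥ v := by
  refine ciInf_le (⟨-spec M, ?_⟩ : BddBelow _) (⟨v, hv⟩ : {v : m → ℝ // ∑ i, v i ^ 2 = 1})
  rintro _ ⟨⟨u, hu⟩, rfl⟩
  simpa [hu] using neg_spec_le_dotProduct_mulVec M u

lemma le_lambdaMin [Nonempty m] (M : Matrix m m ℝ) {c : ℝ}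
    (h : ∀ v : m → ℝ, ∑ i, v i ^ 2 = 1 → c ≤ v ⬝ᵥ M *ᵥ v) : c ≤ lambdaMin M := by
  have : Nonempty {v : m → ℝ // ∑ i, v i ^ 2 = 1} :=
    ⟨⟨Pi.single (Classical.arbitrary m) 1, by simp [Pi.single_apply, apply_ite (· ^ 2)]⟩⟩
  exact le_ciInf fun v => h v.1 v.2

lemma lambdaMin_mul_sum_sq_le (M : Matrix m m ℝ) (v : m → ℝ) :
    lambdaMin M * ∑ i, v i ^ 2 ≤ v ⬝ᵥ M *ᵥ v := by
  set s := ∑ i, v i ^ 2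
  rcases (show 0 ≤ s by positivity).eq_or_lt with hs | hs
  · have : v = 0 := funext fun i =>
      pow_eq_zero_iff two_ne_zero |>.mp <|
        (Finset.sum_eq_zero_iff_of_nonneg fun j _ => sq_nonneg (v j)).mp hs.symm i
          (Finset.mem_univ i)
    simp [this, s]
  · set r := Real.sqrt s
    have hr : 0 < r := Real.sqrt_pos.mpr hs
    have hunit : ∑ i, (r⁻¹ • v) i ^ 2 = 1 := by
      simp only [Pi.smul_apply, smul_eq_mul, mul_pow, ← Finset.mul_sum, inv_pow,
        Real.sq_sqrt hs.le, r]
      exact inv_mul_cancel₀ hs.ne'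
    have hv : v = r • r⁻¹ • v := by rw [smul_smul, mul_inv_cancel₀ hr.ne', one_smul]
    have hquad : v ⬝ᵥ M *ᵥ v = s * ((r⁻¹ • v) ⬝ᵥ M *ᵥ (r⁻¹ • v)) := by
      conv_lhs => rw [hv]
      rw [mulVec_smul, smul_dotProduct, dotProduct_smul, smul_eq_mul, smul_eq_mul,
        ← mul_assoc, ← sq, Real.sq_sqrt hs.le]
    rw [hquad, mul_comm]
    exact mul_le_mul_of_nonneg_left (lambdaMin_le_dotProduct_mulVec M hunit) hs.le

lemma lambdaMin_mul_frob_sq_le_trace {k : Type*} [Fintype k] (M : Matrix m m ℝ)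
    (X : Matrix m k ℝ) : lambdaMin M * frob X ^ 2 ≤ trace (Xᵀ * M * X) := by
  rw [trace_transpose_mul_mul_eq_sum, frob_sq, Finset.sum_comm, Finset.mul_sum]
  exact Finset.sum_le_sum fun b _ => lambdaMin_mul_sum_sq_le M (Xᵀ b)

end Rayleigh

lemma IsOd.dotProduct_vecMul_self {g : Matrix (Fin d) (Fin d) ℝ} (hg : IsOd g) (w : Fin d → ℝ) :
    (w ᵥ* g) ⬝ᵥ (w ᵥ* g) = w ⬝ᵥ w := by
  rw [← dotProduct_mulVec, ← mulVec_transpose, mulVec_mulVec, hg.2, one_mulVec]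

def blockVecMul (G : Matrix (Fin n × Fin d) (Fin d) ℝ) (v : Fin n × Fin d → ℝ) :
    Matrix (Fin d) (Fin n) ℝ :=
  of fun c i => ((fun a => v (i, a)) ᵥ* blk G i) c

lemma dotProduct_had_kron1_mulVec (B : Matrix (Fin n) (Fin n) ℝ)
    (G : Matrix (Fin n × Fin d) (Fin d) ℝ) (v : Fin n × Fin d → ℝ) :
    v ⬝ᵥ had (kron1 B) (G * Gᵀ) *ᵥ v =
      ∑ c, blockVecMul G v c ⬝ᵥ B *ᵥ blockVecMul G v c := by
  have hlhs : v ⬝ᵥ had (kron1 B) (G * Gᵀ) *ᵥ v =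
      ∑ c, ∑ p : Fin n × Fin d, ∑ q : Fin n × Fin d, v p * G p c * B p.1 q.1 * (v q * G q c) := by
    simp only [dotProduct, mulVec, had, kron1, kroneckerMap_apply, mul_apply, transpose_apply,
      of_apply, mul_one, Finset.mul_sum, Finset.sum_mul]
    refine ((Finset.sum_congr rfl fun p _ => Finset.sum_comm).trans Finset.sum_comm).trans ?_
    exact Finset.sum_congr rfl fun c _ => Finset.sum_congr rfl fun p _ =>
      Finset.sum_congr rfl fun q _ => by ring
  rw [hlhs]
  refine Finset.sum_congr rfl fun c _ => ?_
  simp only [blockVecMul, of_apply, vecMul, dotProduct, mulVec, blk, Fintype.sum_prod_type,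
    Finset.mul_sum, Finset.sum_mul]
  refine Finset.sum_congr rfl fun i _ => Finset.sum_comm.trans <| Finset.sum_congr rfl fun j _ =>
    Finset.sum_comm.trans <| Finset.sum_congr rfl fun b _ => Finset.sum_congr rfl fun a _ => ?_
  ring

lemma sum_sq_blockVecMul {G : Matrix (Fin n × Fin d) (Fin d) ℝ} (hG : OdN G)
    (v : Fin n × Fin d → ℝ) : ∑ c, ∑ i, blockVecMul G v c i ^ 2 = ∑ p, v p ^ 2 := by
  rw [Finset.sum_comm, Fintype.sum_prod_type]
  refine Finset.sum_congr rfl fun i _ => ?_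
  simpa only [blockVecMul, of_apply, dotProduct, sq] using
    (hG i).dotProduct_vecMul_self fun a => v (i, a)

lemma neg_spec_le_dotProduct_had_kron1 (B : Matrix (Fin n) (Fin n) ℝ)
    {G : Matrix (Fin n × Fin d) (Fin d) ℝ} (hG : OdN G) (v : Fin n × Fin d → ℝ) :
    -(spec B * ∑ p, v p ^ 2) ≤ v ⬝ᵥ had (kron1 B) (G * Gᵀ) *ᵥ v := by
  rw [dotProduct_had_kron1_mulVec, ← sum_sq_blockVecMul hG v, Finset.mul_sum,
    ← Finset.sum_neg_distrib]
  exact Finset.sum_le_sum fun c _ => neg_spec_le_dotProduct_mulVec B _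

lemma trace_transpose_mul_eq_sum {m k : Type*} [Fintype m] [Fintype k] (X Y : Matrix m k ℝ) :
    trace (Xᵀ * Y) = ∑ p, ∑ b, X p b * Y p b := by
  simp only [trace, diag, mul_apply, transpose_apply]
  exact Finset.sum_comm

lemma trace_transpose_mul_eq_sum_blk (X Y : Matrix (Fin n × Fin d) (Fin d) ℝ) :
    trace (Xᵀ * Y) = ∑ i, trace ((blk X i)ᵀ * blk Y i) := by
  simp only [trace_transpose_mul_eq_sum, Fintype.sum_prod_type, blk, of_apply]

lemma transpose_bcol_mul (M : Matrix (Fin n × Fin d) (Fin n × Fin d) ℝ)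
    (G : Matrix (Fin n × Fin d) (Fin d) ℝ) (i : Fin n) :
    (bcol M i)ᵀ * G = blk (Mᵀ * G) i :=
  rfl

lemma OdN.trace_transpose_mul_self {X : Matrix (Fin n × Fin d) (Fin d) ℝ} (hX : OdN X) :
    trace (Xᵀ * X) = n * d := by
  simp [trace_transpose_mul_eq_sum_blk X X, (hX _).1]

lemma IsOd.frob_sub_sq {X : Matrix (Fin d) (Fin d) ℝ} (hX : IsOd X) (Y : Matrix (Fin d) (Fin d) ℝ) :
    frob (X - Y) ^ 2 = d - 2 * trace (Xᵀ * Y) + frob Y ^ 2 := by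
  rw [frob_sq_eq_trace, frob_sq_eq_trace, transpose_sub, sub_mul, mul_sub, mul_sub, hX.1]
  simp only [trace_sub, trace_one, Fintype.card_fin]
  rw [← trace_transpose (Yᵀ * X), transpose_mul, transpose_transpose]
  ring

lemma IsOd.trace_le_of_frob_sub_le {X X' Y : Matrix (Fin d) (Fin d) ℝ} (hX : IsOd X)
    (hX' : IsOd X') (h : frob (X' - Y) ≤ frob (X - Y)) :
    trace (Xᵀ * Y) ≤ trace (X'ᵀ * Y) := by
  have hsq : frob (X' - Y) ^ 2 ≤ frob (X - Y) ^ 2 := pow_le_pow_left₀ (Real.sqrt_nonneg _) h 2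
  rw [hX.frob_sub_sq, hX'.frob_sub_sq] at hsq
  linarith

lemma InT.trace_sub_transpose_mul_mul_nonneg {Ct : Matrix (Fin n × Fin d) (Fin n × Fin d) ℝ}
    {G Gp : Matrix (Fin n × Fin d) (Fin d) ℝ} (hCt : Ct.IsSymm) (hG : OdN G) (hGp : InT Ct G Gp) :
    0 ≤ trace ((Gp - G)ᵀ * Ct * G) := by
  rw [transpose_sub, Matrix.sub_mul, Matrix.sub_mul, trace_sub, sub_nonneg]
  simp only [Matrix.mul_assoc, trace_transpose_mul_eq_sum_blk _ (Ct * G)]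
  refine Finset.sum_le_sum fun i _ => ?_
  have hnear := hGp.2 i (blk G i) (hG i)
  rw [transpose_bcol_mul, hCt.eq] at hnear
  exact (hG i).trace_le_of_frob_sub_le (hGp.1 i) hnear

lemma trace_transpose_mul_add_smul_one_mul {X : Matrix (Fin n × Fin d) (Fin d) ℝ} (hX : OdN X)
    (C : Matrix (Fin n × Fin d) (Fin n × Fin d) ℝ) (α : ℝ) :
    trace (Xᵀ * (C + α • 1) * X) = obj C X + α * (n * d) := by
  rw [Matrix.mul_add, Matrix.add_mul, trace_add, Matrix.mul_smul, Matrix.mul_one,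
    Matrix.smul_mul, trace_smul, hX.trace_transpose_mul_self, obj, smul_eq_mul]

lemma trace_quadratic_sub {m k : Type*} [Fintype m] [Fintype k] {N : Matrix m m ℝ}
    (hN : N.IsSymm) (X Y : Matrix m k ℝ) :
    trace (Yᵀ * N * Y) - trace (Xᵀ * N * X) =
      trace ((Y - X)ᵀ * N * (Y - X)) + 2 * trace ((Y - X)ᵀ * N * X) := by
  have hswap : trace (Xᵀ * N * (Y - X)) = trace ((Y - X)ᵀ * N * X) := by
    rw [← trace_transpose, transpose_mul, transpose_mul, transpose_transpose, hN.eq,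
      Matrix.mul_assoc]
  have hY : Y = X + (Y - X) := by abel
  conv_lhs => rw [hY]
  simp only [transpose_add, Matrix.add_mul, Matrix.mul_add, trace_add, hswap]
  ring

lemma trace_transpose_mul_mul_le_add_smul_mul_transpose {m k l : Type*} [Fintype m] [Fintype k]
    [Fintype l] (M : Matrix m m ℝ) {μ : ℝ} (hμ : 0 ≤ μ) (X : Matrix m l ℝ) (Y : Matrix m k ℝ) :
    trace (Yᵀ * M * Y) ≤ trace (Yᵀ * (M + μ • (X * Xᵀ)) * Y) := by
  have hgram : Yᵀ * (X * Xᵀ) * Y = (Xᵀ * Y)ᵀ * (Xᵀ * Y) := by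
    simp only [transpose_mul, transpose_transpose, Matrix.mul_assoc]
  rw [Matrix.mul_add, Matrix.add_mul, trace_add, Matrix.mul_smul, Matrix.smul_mul, trace_smul,
    smul_eq_mul, hgram, ← frob_sq_eq_trace]
  exact le_add_of_nonneg_right (by positivity)

lemma had_eq_hadamard {m k : Type*} (X Y : Matrix m k ℝ) : had X Y = X ⊙ Y :=
  rfl

lemma kron1_sub_smul_onesMat (W : Matrix (Fin n) (Fin n) ℝ) (μ : ℝ) :
    kron1 (W - μ • onesMat (Fin n)) = kron1 W - μ • onesMat (Fin n × Fin d) := by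
  ext p q
  simp [kron1, onesMat]

lemma had_add_eq_add_had_sub_smul_onesMat {m : Type*} (A S E : Matrix m m ℝ) (μ : ℝ) :
    had A (S + E) = had A E + had (A - μ • onesMat m) S + μ • S := by
  ext p q
  simp only [had, onesMat, Matrix.add_apply, Matrix.sub_apply, Matrix.smul_apply, of_apply,
    smul_eq_mul]
  ring

lemma isSymm_kron1 {W : Matrix (Fin n) (Fin n) ℝ} (hW : W.IsSymm) :
    (kron1 W : Matrix (Fin n × Fin d) (Fin n × Fin d) ℝ).IsSymm := by
  rw [IsSymm, kron1, ← kroneckerMap_transpose, hW.eq]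
  rfl

lemma isSymm_had {m : Type*} {X Y : Matrix m m ℝ} (hX : X.IsSymm) (hY : Y.IsSymm) :
    (had X Y).IsSymm := by
  rw [IsSymm, had_eq_hadamard, transpose_hadamard, hX.eq, hY.eq]

lemma isSymm_had_kron1_add_smul_one {W : Matrix (Fin n) (Fin n) ℝ} (hW : W.IsSymm)
    (G : Matrix (Fin n × Fin d) (Fin d) ℝ) {E : Matrix (Fin n × Fin d) (Fin n × Fin d) ℝ}
    (hE : E.IsSymm) (α : ℝ) : (had (kron1 W) (G * Gᵀ + E) + α • 1).IsSymm := by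
  have hGram : (G * Gᵀ).IsSymm := by rw [IsSymm, transpose_mul, transpose_transpose]
  exact (isSymm_had (isSymm_kron1 hW) (hGram.add hE)).add (isSymm_one.smul α)

lemma sub_spec_sub_spec_le_lambdaMin [Nonempty (Fin n × Fin d)] (W : Matrix (Fin n) (Fin n) ℝ)
    (μ : ℝ) {G : Matrix (Fin n × Fin d) (Fin d) ℝ} (hG : OdN G)
    (E : Matrix (Fin n × Fin d) (Fin n × Fin d) ℝ) (α : ℝ) :
    α - spec E - spec (W - μ • onesMat (Fin n)) ≤
      lambdaMin (E + had (kron1 W - μ • onesMat (Fin n × Fin d)) (G * Gᵀ) + α • 1) := by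
  refine le_lambdaMin _ fun v hv => ?_
  have hE := neg_spec_le_dotProduct_mulVec E v
  have hW := neg_spec_le_dotProduct_had_kron1 (W - μ • onesMat (Fin n)) hG v
  rw [kron1_sub_smul_onesMat] at hW
  rw [hv] at hE hW
  have hα : v ⬝ᵥ (α • (1 : Matrix (Fin n × Fin d) (Fin n × Fin d) ℝ)) *ᵥ v = α := by
    rw [smul_mulVec, one_mulVec, dotProduct_smul, smul_eq_mul]
    simp only [dotProduct, ← sq, hv, mul_one]
  simp only [add_mulVec, dotProduct_add, hα]
  linarith

theorem sufficient_ascent_general {n d : ℕ} (hn : 0 < n) (hd : 0 < d)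
    (W : Matrix (Fin n) (Fin n) ℝ) (hW : Wᵀ = W)
    (μ : ℝ) (hμ : 0 < μ)
    (Gs : Matrix (Fin n × Fin d) (Fin d) ℝ) (hGs : OdN Gs)
    (Δ : Matrix (Fin n × Fin d) (Fin n × Fin d) ℝ) (hΔ : Δᵀ = Δ)
    (A C : Matrix (Fin n × Fin d) (Fin n × Fin d) ℝ)
    (hA : A = kron1 W) (hC : C = had A (Gs * Gsᵀ + Δ))
    (α : ℝ) (hα : spec (had A Δ) + spec (W - μ • onesMat (Fin n)) < α)
    (Ct : Matrix (Fin n × Fin d) (Fin n × Fin d) ℝ)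
    (hCt : Ct = C + α • (1 : Matrix (Fin n × Fin d) (Fin n × Fin d) ℝ))
    (a₀ : ℝ)
    (ha₀ : a₀ = lambdaMin (had A Δ + had (A - μ • onesMat (Fin n × Fin d)) (Gs * Gsᵀ) +
      α • (1 : Matrix (Fin n × Fin d) (Fin n × Fin d) ℝ))) :
    0 < a₀ ∧
    ∀ G Gp : Matrix (Fin n × Fin d) (Fin d) ℝ, OdN G → InT Ct G Gp →
      a₀ * frob (Gp - G) ^ 2 ≤ obj C Gp - obj C G := by
  subst hA
  have : Nonempty (Fin n × Fin d) := ⟨(⟨0, hn⟩, ⟨0, hd⟩)⟩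
  set M := had (kron1 W) Δ + had (kron1 W - μ • onesMat (Fin n × Fin d)) (Gs * Gsᵀ) + α • 1
  have hCtM : Ct = M + μ • (Gs * Gsᵀ) := by
    rw [hCt, hC, had_add_eq_add_had_sub_smul_onesMat (kron1 W) _ Δ μ, add_right_comm]
  have hCt_symm : Ct.IsSymm := hCt ▸ hC ▸ isSymm_had_kron1_add_smul_one hW Gs hΔ α
  refine ⟨?_, fun G Gp hG hGp => ?_⟩
  · rw [ha₀]
    exact lt_of_lt_of_le (by linarith) (sub_spec_sub_spec_le_lambdaMin W μ hGs _ α)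
  calc a₀ * frob (Gp - G) ^ 2 ≤ trace ((Gp - G)ᵀ * M * (Gp - G)) :=
        ha₀ ▸ lambdaMin_mul_frob_sq_le_trace M (Gp - G)
    _ ≤ trace ((Gp - G)ᵀ * Ct * (Gp - G)) :=
        hCtM ▸ trace_transpose_mul_mul_le_add_smul_mul_transpose M hμ.le Gs (Gp - G)
    _ ≤ trace ((Gp - G)ᵀ * Ct * (Gp - G)) + 2 * trace ((Gp - G)ᵀ * Ct * G) :=
        le_add_of_nonneg_right
          (mul_nonneg zero_le_two (hGp.trace_sub_transpose_mul_mul_nonneg hCt_symm hG))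
    _ = trace (Gpᵀ * Ct * Gp) - trace (Gᵀ * Ct * G) := (trace_quadratic_sub hCt_symm G Gp).symm
    _ = obj C Gp - obj C G := by
        rw [hCt, trace_transpose_mul_add_smul_one_mul hGp.1,
          trace_transpose_mul_add_smul_one_mul hG]
        ring

/-- sufficient ascent of the GPM step.
Under the generative model (with `n, d ≥ 1`), suppose
`α > ‖A ∘ Δ‖ + ‖W − μ·1_n1_nᵀ‖`. Then
`a₀ := λ_min(A ∘ Δ + (A − μ·1 1ᵀ) ∘ G*G*ᵀ + α I) > 0`, and for every
`G ∈ O(d)^{⊗n}` and every `G⁺ ∈ T_α(G)`, `f(G⁺) − f(G) ≥ a₀ ‖G⁺ − G‖_F²`. -/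
theorem sufficient_ascent {n d : ℕ} (hn : 0 < n) (hd : 0 < d)
    (W : Matrix (Fin n) (Fin n) ℝ) (hW : Wᵀ = W)
    (μ : ℝ) (hμ : 0 < μ) (hWdiag : ∀ i : Fin n, W i i = μ)
    (Gs : Matrix (Fin n × Fin d) (Fin d) ℝ) (hGs : OdN Gs)
    (Δ : Matrix (Fin n × Fin d) (Fin n × Fin d) ℝ) (hΔ : Δᵀ = Δ)
    (hΔdiag : ∀ i : Fin n, dblk Δ i i = 0)
    (A C : Matrix (Fin n × Fin d) (Fin n × Fin d) ℝ)
    (hA : A = kron1 W) (hC : C = had A (Gs * Gsᵀ + Δ))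
    (α : ℝ) (hα : spec (had A Δ) + spec (W - μ • onesMat (Fin n)) < α)
    (Ct : Matrix (Fin n × Fin d) (Fin n × Fin d) ℝ)
    (hCt : Ct = C + α • (1 : Matrix (Fin n × Fin d) (Fin n × Fin d) ℝ))
    (a₀ : ℝ)
    (ha₀ : a₀ = lambdaMin (had A Δ + had (A - μ • onesMat (Fin n × Fin d)) (Gs * Gsᵀ) +
      α • (1 : Matrix (Fin n × Fin d) (Fin n × Fin d) ℝ))) :
    0 < a₀ ∧
    ∀ G Gp : Matrix (Fin n × Fin d) (Fin d) ℝ, OdN G → InT Ct G Gp →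
      a₀ * frob (Gp - G) ^ 2 ≤ obj C Gp - obj C G :=
  sufficient_ascent_general hn hd W hW μ hμ Gs hGs Δ hΔ A C hA hC α hα Ct hCt a₀ ha₀

end GroupSync
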